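/- arXiv:2102.07269 — 4 statements merged into one kernel-verified Lean document; each statement's English description precedes it below -/
import Mathlib

section
/- There are exactly n^{n-2} labeled trees on n vertices, for n >= 2 (Cayley's formula). -/
/-!
Joyal's bijection. Cutting the cycles of a map `f : α → α` leaves a rooted forest `g` (a map
all of whose orbits end in fixed points) whose roots are the periodic points of `f`, and `f` is
recovered from `g` together with the permutation that `f` induces on them. Dually, cutting a rooted
tree along the path from a marked vertex `a` to the root leaves a rooted forest whose roots are the
vertices of that path, and the tree and `a` are recovered from the forest together with the order
in which the path visits them. Permutations and orderings of a finite set are equinumerous, so the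
maps `α → α` are as many as the trees on `α` with a root and a marked vertex; a tree is determined
by its parent map towards any root, hence `n ^ n = n * n * T(n)`.
-/

open Function Set Equiv

namespace Cayley

open scoped Classical

noncomputable section

variable {α : Type*}

lemma exists_iterate_mem_of_eqOn_compl {S : Set α} {f g : α → α} (hfg : ∀ v ∉ S, f v = g v)
    {k : ℕ} {v : α} (hk : g^[k] v ∈ S) : ∃ m, f^[m] v ∈ S := by
  induction k generalizing v with
  | zero => exact ⟨0, hk⟩
  | succ k ih =>
    by_cases hv : v ∈ S
    · exact ⟨0, hv⟩
    · obtain ⟨m, hm⟩ := ih (v := g v) (by rwa [← iterate_succ_apply])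
      exact ⟨m + 1, by rwa [iterate_succ_apply, hfg v hv]⟩

/-- `g` is the parent map of a rooted forest whose roots are the fixed points of `g`. -/
def EventuallyFixed (g : α → α) : Prop := ∀ v, ∃ k, g^[k] v ∈ fixedPoints g

abbrev Forest (α : Type*) : Type _ := {g : α → α // EventuallyFixed g}

section Cut

variable {S : Set α} {f : α → α}

lemma fixedPoints_piecewise_id (hf : ∀ v ∉ S, f v ≠ v) : fixedPoints (S.piecewise id f) = S := by
  ext v
  by_cases hv : v ∈ S
  · simp [IsFixedPt, hv]
  · simp [IsFixedPt, hv, hf v hv]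

/-- Cut every edge `v → f v` with `v ∈ S`, turning the points of `S` into roots. -/
def Forest.cut (S : Set α) (f : α → α) (hf : ∀ v ∉ S, f v ≠ v) (hS : ∀ v, ∃ k, f^[k] v ∈ S) :
    Forest α :=
  ⟨S.piecewise id f, fun v => by
    obtain ⟨k, hk⟩ := hS v
    rw [fixedPoints_piecewise_id hf]
    exact exists_iterate_mem_of_eqOn_compl (fun w hw => piecewise_eq_of_notMem S id f hw) hk⟩

lemma Forest.fixedPoints_cut (hf : ∀ v ∉ S, f v ≠ v) (hS : ∀ v, ∃ k, f^[k] v ∈ S) :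
    fixedPoints (Forest.cut S f hf hS).1 = S :=
  fixedPoints_piecewise_id hf

end Cut

section Cycles

lemma exists_iterate_mem_periodicPts [Finite α] (f : α → α) (v : α) :
    ∃ k, f^[k] v ∈ periodicPts f := by
  obtain ⟨i, j, hne, hij⟩ := Finite.exists_ne_map_eq_of_infinite fun k : ℕ => f^[k] v
  wlog hlt : i < j generalizing i j
  · exact this j i hne.symm hij.symm (by omega)
  refine ⟨i, mk_mem_periodicPts (n := j - i) (by omega) ?_⟩
  rw [IsPeriodicPt, IsFixedPt, ← iterate_add_apply, Nat.sub_add_cancel hlt.le]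
  exact hij.symm

lemma apply_ne_self_of_notMem_periodicPts {f : α → α} {v : α} (hv : v ∉ periodicPts f) : f v ≠ v :=
  fun h => hv (mk_mem_periodicPts one_pos (by simpa [IsPeriodicPt, IsFixedPt] using h))

def cutCycles [Finite α] (f : α → α) : Forest α :=
  Forest.cut (periodicPts f) f (fun _ => apply_ne_self_of_notMem_periodicPts)
    (exists_iterate_mem_periodicPts f)

def extendPerm {S : Set α} (σ : Perm S) (g : α → α) : α → α :=
  fun v => if h : v ∈ S then σ ⟨v, h⟩ else g v

lemma iterate_extendPerm {S : Set α} (σ : Perm S) (g : α → α) (k : ℕ) {v : α} (hv : v ∈ S) :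
    (extendPerm σ g)^[k] v = (σ ^ k) ⟨v, hv⟩ := by
  induction k generalizing v with
  | zero => rfl
  | succ k ih =>
    rw [iterate_succ_apply, extendPerm, dif_pos hv, ih, pow_succ, Perm.mul_apply]

lemma periodicPts_extendPerm [Finite α] {S : Set α} (σ : Perm S) {g : α → α}
    (hg : ∀ v ∉ S, ∃ k, g^[k] v ∈ S) : periodicPts (extendPerm σ g) = S := by
  refine Subset.antisymm (fun v hv => ?_) fun v hv => ?_
  · by_contra hvS
    obtain ⟨k, hk, hper⟩ := mem_periodicPts.1 hv
    obtain ⟨j, hj⟩ := hg v hvS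
    obtain ⟨m, hm⟩ := exists_iterate_mem_of_eqOn_compl (f := extendPerm σ g)
      (fun w hw => dif_neg hw) hj
    have hmul : (extendPerm σ g)^[k * (m + 1)] v = v := (hper.mul_const (m + 1)).eq
    have hle : m + 1 ≤ k * (m + 1) := Nat.le_mul_of_pos_left _ hk
    rw [show k * (m + 1) = (k * (m + 1) - m) + m by omega, iterate_add_apply,
      iterate_extendPerm σ g _ hm] at hmul
    exact hvS (hmul ▸ Subtype.coe_prop _)
  · exact mk_mem_periodicPts (orderOf_pos σ) <| by
      rw [IsPeriodicPt, IsFixedPt, iterate_extendPerm σ g _ hv, pow_orderOf_eq_one]; rfl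

lemma fixedPoints_cutCycles [Finite α] (f : α → α) :
    fixedPoints (cutCycles f).1 = periodicPts f :=
  Forest.fixedPoints_cut _ _

lemma bijOn_fixedPoints_of_cutCycles_eq [Finite α] {f : α → α} {g : Forest α}
    (h : cutCycles f = g) : BijOn f (fixedPoints g.1) (fixedPoints g.1) := by
  subst h
  rw [fixedPoints_cutCycles]
  exact bijOn_periodicPts f

def cutCyclesFiberEquiv [Finite α] (g : Forest α) :
    {f : α → α // cutCycles f = g} ≃ Perm (fixedPoints g.1) where
  toFun f := BijOn.equiv f.1 (bijOn_fixedPoints_of_cutCycles_eq f.2)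
  invFun σ := ⟨extendPerm σ g.1, by
    refine Subtype.ext (funext fun v => ?_)
    change (periodicPts _).piecewise id _ v = g.1 v
    have hper := periodicPts_extendPerm σ fun v _ => g.2 v
    by_cases hv : v ∈ fixedPoints g.1
    · rw [piecewise_eq_of_mem _ _ _ (by rwa [hper])]
      exact hv.symm
    · rw [piecewise_eq_of_notMem _ _ _ (by rwa [hper]), extendPerm, dif_neg hv]⟩
  left_inv := by
    rintro ⟨f, rfl⟩
    refine Subtype.ext (funext fun v => ?_)
    by_cases hv : v ∈ fixedPoints (cutCycles f).1
    · exact dif_pos hv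
    · change extendPerm _ _ v = f v
      rw [extendPerm, dif_neg hv]
      rw [fixedPoints_cutCycles] at hv
      exact piecewise_eq_of_notMem _ _ _ hv
  right_inv σ := Equiv.ext fun v => Subtype.ext (dif_pos v.2)

end Cycles

def IsRootedAt (p : α → α) (r : α) : Prop := p r = r ∧ ∀ v, ∃ k, p^[k] v = r

abbrev RootedMap (α : Type*) : Type _ := Σ r : α, {p : α → α // IsRootedAt p r}

namespace IsRootedAt

variable {p : α → α} {r v : α}

def depth (hp : IsRootedAt p r) (v : α) : ℕ := Nat.find (hp.2 v)

lemma iterate_depth (hp : IsRootedAt p r) (v : α) : p^[hp.depth v] v = r :=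
  Nat.find_spec (hp.2 v)

lemma depth_le (hp : IsRootedAt p r) {k : ℕ} (h : p^[k] v = r) : hp.depth v ≤ k :=
  Nat.find_min' _ h

lemma iterate_of_depth_le (hp : IsRootedAt p r) {k : ℕ} (h : hp.depth v ≤ k) : p^[k] v = r := by
  rw [← Nat.sub_add_cancel h, iterate_add_apply, hp.iterate_depth, iterate_fixed hp.1]

lemma iterate_min_depth (hp : IsRootedAt p r) (v : α) (k : ℕ) :
    p^[min k (hp.depth v)] v = p^[k] v := by
  rcases le_total k (hp.depth v) with h | h
  · rw [min_eq_left h]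
  · rw [min_eq_right h, hp.iterate_depth, hp.iterate_of_depth_le h]

lemma iterate_injOn (hp : IsRootedAt p r) {i j : ℕ} (hi : i ≤ hp.depth v) (hj : j ≤ hp.depth v)
    (h : p^[i] v = p^[j] v) : i = j := by
  by_contra hne
  wlog hij : i < j generalizing i j
  · exact this hj hi h.symm (Ne.symm hne) (by omega)
  have hr : p^[hp.depth v - j + i] v = r := by
    rw [iterate_add_apply, h, ← iterate_add_apply, Nat.sub_add_cancel hj, hp.iterate_depth]
  have := hp.depth_le hr
  omega

lemma depth_apply (hp : IsRootedAt p r) (hv : v ≠ r) : hp.depth (p v) + 1 = hp.depth v := by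
  have hpos : hp.depth v ≠ 0 := fun h => hv (by simpa [h] using hp.iterate_depth v)
  have hle : hp.depth v ≤ hp.depth (p v) + 1 :=
    hp.depth_le (by rw [iterate_succ_apply, hp.iterate_depth])
  have hge : hp.depth (p v) ≤ hp.depth v - 1 :=
    hp.depth_le (by
      rw [← iterate_succ_apply, Nat.succ_eq_add_one, Nat.sub_one_add_one hpos, hp.iterate_depth])
  omega

lemma eq_of_apply_apply_eq (hp : IsRootedAt p r) (h : p (p v) = v) : v = r := by
  by_contra hv
  have hpv : p v ≠ r := fun hpv => hv (by rw [← h, hpv, hp.1])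
  have h1 := hp.depth_apply hv
  have h2 := hp.depth_apply hpv
  rw [h] at h2
  omega

lemma apply_ne_self (hp : IsRootedAt p r) (hv : v ≠ r) : p v ≠ v :=
  fun h => hv (hp.eq_of_apply_apply_eq (by rw [h, h]))

end IsRootedAt

/-- The path from `a` to the root. -/
def spine (p : α → α) (a : α) : Set α := range fun k : ℕ => p^[k] a

namespace IsRootedAt

variable {p : α → α} {r : α}

lemma root_mem_spine (hp : IsRootedAt p r) (a : α) : r ∈ spine p a :=
  ⟨_, hp.iterate_depth a⟩

lemma apply_ne_self_of_notMem_spine (hp : IsRootedAt p r) {a v : α} (hv : v ∉ spine p a) :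
    p v ≠ v :=
  hp.apply_ne_self fun h => hv (h ▸ hp.root_mem_spine a)

lemma exists_iterate_mem_spine (hp : IsRootedAt p r) (a v : α) : ∃ k, p^[k] v ∈ spine p a := by
  obtain ⟨k, hk⟩ := hp.2 v
  exact ⟨k, hk ▸ hp.root_mem_spine a⟩

lemma card_spine (hp : IsRootedAt p r) (a : α) : Nat.card (spine p a) = hp.depth a + 1 := by
  have h : spine p a = range fun i : Fin (hp.depth a + 1) => p^[i] a := by
    refine Subset.antisymm ?_ (range_subset_iff.2 fun i => mem_range_self (i : ℕ))
    rintro _ ⟨k, rfl⟩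
    exact ⟨⟨min k (hp.depth a), by omega⟩, hp.iterate_min_depth a k⟩
  rw [h, Nat.card_range_of_injective, Nat.card_fin]
  exact fun i j hij => Fin.ext (hp.iterate_injOn (by omega) (by omega) hij)

/-- `S` is a parameter because where this is used, it is only propositionally the spine. -/
def spineEnum [Finite α] (hp : IsRootedAt p r) (a : α) {S : Set α} (hS : spine p a = S) :
    Fin (Nat.card S) ≃ S :=
  Equiv.ofBijective (fun i => ⟨p^[i] a, hS.subset (mem_range_self (i : ℕ))⟩) <| by
    subst hS
    refine Injective.bijective_of_nat_card_le (fun i j hij => Fin.ext ?_) (by simp)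
    have hi := i.isLt
    have hj := j.isLt
    have hc := hp.card_spine a
    exact hp.iterate_injOn (by omega) (by omega) (congrArg Subtype.val hij)

end IsRootedAt

def cutSpine : RootedMap α × α → Forest α
  | (⟨_, p, hp⟩, a) =>
    Forest.cut (spine p a) p (fun _ => hp.apply_ne_self_of_notMem_spine)
      (hp.exists_iterate_mem_spine a)

lemma spine_eq_fixedPoints_of_cutSpine_eq {r : α} {p : α → α} {hp : IsRootedAt p r} {a : α}
    {g : Forest α} (h : cutSpine (⟨r, p, hp⟩, a) = g) : spine p a = fixedPoints g.1 := by
  subst h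
  exact (Forest.fixedPoints_cut (fun _ => hp.apply_ne_self_of_notMem_spine)
    (hp.exists_iterate_mem_spine a)).symm

section PathParent

variable {S : Set α} {k : ℕ} (e : Fin k ≃ S) (g : α → α)

/-- The path `e 0 → e 1 → ⋯ → e (k - 1)`, rooted at its last vertex, grafted onto `g`. -/
def pathParent (v : α) : α :=
  if h : v ∈ S then e ⟨min (e.symm ⟨v, h⟩ + 1) (k - 1), by have := (e.symm ⟨v, h⟩).isLt; omega⟩
  else g v

lemma pathParent_enum (i : Fin k) :
    pathParent e g (e i) = e ⟨min (i + 1) (k - 1), by omega⟩ := by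
  simp [pathParent]

lemma iterate_pathParent_enum (i : Fin k) (j : ℕ) :
    (pathParent e g)^[j] (e i) = e ⟨min (i + j) (k - 1), by omega⟩ := by
  induction j with
  | zero => simp [show min (i : ℕ) (k - 1) = i by omega]
  | succ j ih =>
    rw [iterate_succ_apply', ih, pathParent_enum]
    congr 3
    simp only
    omega

lemma isRootedAt_pathParent (hk : 0 < k) (hg : ∀ v, ∃ m, g^[m] v ∈ S) :
    IsRootedAt (pathParent e g) (e ⟨k - 1, by omega⟩) := by
  have hlast : ∀ i, (pathParent e g)^[k - 1] (e i) = e ⟨k - 1, by omega⟩ := fun i => by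
    rw [iterate_pathParent_enum]
    congr 3
    omega
  refine ⟨?_, fun v => ?_⟩
  · simpa using iterate_pathParent_enum e g ⟨k - 1, by omega⟩ 1
  · obtain ⟨m, hm⟩ := hg v
    obtain ⟨m', hm'⟩ :=
      exists_iterate_mem_of_eqOn_compl (f := pathParent e g) (fun w hw => dif_neg hw) hm
    refine ⟨k - 1 + m', ?_⟩
    rw [iterate_add_apply, ← hlast (e.symm ⟨_, hm'⟩), apply_symm_apply]

lemma spine_pathParent (hk : 0 < k) : spine (pathParent e g) (e ⟨0, hk⟩) = S := by
  refine Subset.antisymm ?_ fun v hv => ⟨e.symm ⟨v, hv⟩, ?_⟩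
  · rintro _ ⟨j, rfl⟩
    change (pathParent e g)^[j] (e ⟨0, hk⟩ : α) ∈ S
    rw [iterate_pathParent_enum]
    exact Subtype.coe_prop _
  · have hi := (e.symm ⟨v, hv⟩).isLt
    change (pathParent e g)^[_] (e ⟨0, hk⟩ : α) = v
    rw [iterate_pathParent_enum]
    convert congrArg Subtype.val (e.apply_symm_apply ⟨v, hv⟩) using 3
    exact Fin.ext (by simp only; omega)

end PathParent

lemma Forest.card_fixedPoints_pos [Finite α] [Nonempty α] (g : Forest α) :
    0 < Nat.card (fixedPoints g.1) := by
  obtain ⟨k, hk⟩ := g.2 (Classical.arbitrary α)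
  have : Nonempty (fixedPoints g.1) := ⟨⟨_, hk⟩⟩
  exact Nat.card_pos

lemma cutSpine_pathParent [Finite α] [Nonempty α] (g : Forest α)
    (e : Fin (Nat.card (fixedPoints g.1)) ≃ fixedPoints g.1) :
    cutSpine (⟨_, pathParent e g.1, isRootedAt_pathParent e g.1 g.card_fixedPoints_pos g.2⟩,
      e ⟨0, g.card_fixedPoints_pos⟩) = g := by
  refine Subtype.ext (funext fun v => ?_)
  change (spine _ _).piecewise id (pathParent e g.1) v = g.1 v
  have hS := spine_pathParent e g.1 g.card_fixedPoints_pos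
  by_cases hv : v ∈ fixedPoints g.1
  · rw [piecewise_eq_of_mem _ _ _ (by rwa [hS])]
    exact hv.symm
  · rw [piecewise_eq_of_notMem _ _ _ (by rwa [hS]), pathParent, dif_neg hv]

def cutSpineFiberEquiv [Finite α] [Nonempty α] (g : Forest α) :
    {x : RootedMap α × α // cutSpine x = g} ≃
      (Fin (Nat.card (fixedPoints g.1)) ≃ fixedPoints g.1) where
  toFun := fun ⟨(⟨_, _, hp⟩, a), hx⟩ => hp.spineEnum a (spine_eq_fixedPoints_of_cutSpine_eq hx)
  invFun e := ⟨(⟨_, pathParent e g.1, isRootedAt_pathParent e g.1 g.card_fixedPoints_pos g.2⟩,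
      e ⟨0, g.card_fixedPoints_pos⟩), cutSpine_pathParent g e⟩
  left_inv := by
    rintro ⟨⟨⟨r, p, hp⟩, a⟩, hx⟩
    have hS := spine_eq_fixedPoints_of_cutSpine_eq hx
    have hk : Nat.card (fixedPoints g.1) - 1 = hp.depth a := by
      rw [← hS, hp.card_spine, Nat.add_sub_cancel]
    refine Subtype.ext (Prod.ext (Sigma.subtype_ext ?_ (funext fun v => ?_)) rfl)
    · change p^[Nat.card (fixedPoints g.1) - 1] a = r
      rw [hk, hp.iterate_depth]
    · change pathParent (hp.spineEnum a hS) g.1 v = p v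
      by_cases hv : v ∈ fixedPoints g.1
      · obtain ⟨i, hi⟩ := (hp.spineEnum a hS).surjective ⟨v, hv⟩
        obtain rfl : (hp.spineEnum a hS i : α) = v := congrArg Subtype.val hi
        rw [pathParent_enum]
        change p^[min (i + 1) _] a = p (p^[i] a)
        rw [hk, hp.iterate_min_depth, iterate_succ_apply']
      · rw [pathParent, dif_neg hv, ← hx]
        exact piecewise_eq_of_notMem _ _ _ (hS ▸ hv)
  right_inv e := Equiv.ext fun i => Subtype.ext <| by
    change (pathParent e g.1)^[i] (e ⟨0, _⟩ : α) = e i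
    rw [iterate_pathParent_enum]
    congr 3
    have := i.isLt
    simp only
    omega

/-- Joyal's bijection. -/
def endoEquivRootedMapProd [Finite α] [Nonempty α] : (α → α) ≃ RootedMap α × α :=
  calc (α → α)
    _ ≃ Σ g : Forest α, {f : α → α // cutCycles f = g} := (Equiv.sigmaFiberEquiv cutCycles).symm
    _ ≃ Σ g : Forest α, Perm (fixedPoints g.1) := Equiv.sigmaCongrRight cutCyclesFiberEquiv
    _ ≃ Σ g : Forest α, (Fin (Nat.card (fixedPoints g.1)) ≃ fixedPoints g.1) :=
      Equiv.sigmaCongrRight fun _ => Equiv.equivCongr (Finite.equivFin _) (Equiv.refl _)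
    _ ≃ Σ g : Forest α, {x : RootedMap α × α // cutSpine x = g} :=
      Equiv.sigmaCongrRight fun g => (cutSpineFiberEquiv g).symm
    _ ≃ RootedMap α × α := Equiv.sigmaFiberEquiv cutSpine

section Trees

open SimpleGraph

def parentGraph (p : α → α) : SimpleGraph α := SimpleGraph.fromRel fun x y => p x = y

lemma parentGraph_adj {p : α → α} {x y : α} :
    (parentGraph p).Adj x y ↔ x ≠ y ∧ (p x = y ∨ p y = x) :=
  SimpleGraph.fromRel_adj _ _ _

lemma _root_.SimpleGraph.IsTree.eq_of_le [Finite α] {G H : SimpleGraph α} (hH : H.IsTree)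
    (hG : G.IsTree) (h : H ≤ G) : H = G := by
  have hH' := (isTree_iff_connected_and_card.1 hH).2
  have hG' := (isTree_iff_connected_and_card.1 hG).2
  rw [← edgeSet_inj]
  refine Set.eq_of_subset_of_ncard_le (edgeSet_mono h) ?_ (Set.toFinite _)
  rw [← Nat.card_coe_set_eq, ← Nat.card_coe_set_eq]
  omega

namespace IsRootedAt

variable {p q : α → α} {r : α}

lemma parentGraph_adj_apply (hp : IsRootedAt p r) {v : α} (hv : v ≠ r) :
    (parentGraph p).Adj v (p v) :=
  parentGraph_adj.2 ⟨(hp.apply_ne_self hv).symm, Or.inl rfl⟩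

lemma reachable (hp : IsRootedAt p r) (v : α) : (parentGraph p).Reachable v r := by
  obtain ⟨k, hk⟩ := hp.2 v
  induction k generalizing v with
  | zero => exact hk ▸ Reachable.refl v
  | succ k ih =>
    by_cases hv : v = r
    · exact hv ▸ Reachable.refl v
    · exact (hp.parentGraph_adj_apply hv).reachable.trans
        (ih (p v) (by rwa [← iterate_succ_apply]))

lemma connected (hp : IsRootedAt p r) : (parentGraph p).Connected :=
  (connected_iff _).2 ⟨fun u v => (hp.reachable u).trans (hp.reachable v).symm, ⟨r⟩⟩

def complEquivEdgeSet (hp : IsRootedAt p r) : ({r}ᶜ : Set α) ≃ (parentGraph p).edgeSet := by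
  refine Equiv.ofBijective (fun v => ⟨s(v, p v), hp.parentGraph_adj_apply v.2⟩) ⟨?_, ?_⟩
  · rintro ⟨u, hu⟩ ⟨v, hv⟩ huv
    rcases Sym2.eq_iff.1 (congrArg Subtype.val huv) with ⟨h, -⟩ | ⟨rfl, hpu⟩
    · exact Subtype.ext h
    · exact absurd (hp.eq_of_apply_apply_eq hpu) hv
  · rintro ⟨e, he⟩
    induction e using Sym2.inductionOn with
    | hf x y =>
      obtain ⟨hxy, rfl | rfl⟩ := parentGraph_adj.1 ((mem_edgeSet _).1 he)
      · exact ⟨⟨x, fun hx => hxy (by rw [mem_singleton_iff.1 hx, hp.1])⟩, rfl⟩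
      · exact ⟨⟨y, fun hy => hxy (by rw [mem_singleton_iff.1 hy, hp.1])⟩,
          Subtype.ext Sym2.eq_swap⟩

lemma card_edgeSet [Finite α] (hp : IsRootedAt p r) :
    Nat.card (parentGraph p).edgeSet + 1 = Nat.card α := by
  rw [← Nat.card_congr hp.complEquivEdgeSet, Nat.card_coe_set_eq, ← Set.ncard_singleton r,
    Set.ncard_compl_add_ncard]

lemma isTree [Finite α] (hp : IsRootedAt p r) : (parentGraph p).IsTree :=
  isTree_iff_connected_and_card.2 ⟨hp.connected, hp.card_edgeSet⟩

lemma eq_of_parentGraph_eq (hp : IsRootedAt p r) (hq : IsRootedAt q r)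
    (h : parentGraph p = parentGraph q) : p = q := by
  funext v
  induction hd : hp.depth v using Nat.strong_induction_on generalizing v with
  | _ d ih =>
    by_cases hv : v = r
    · rw [hv, hp.1, hq.1]
    rcases (parentGraph_adj.1 (h ▸ hp.parentGraph_adj_apply hv)).2 with hqv | hqpv
    · exact hqv.symm
    · have hpv := ih _ (by rw [← hd, ← hp.depth_apply hv]; omega) (p v) rfl
      exact absurd (hp.eq_of_apply_apply_eq (hpv.trans hqpv)) hv

end IsRootedAt

variable {G : SimpleGraph α}

def pathToRoot (hG : G.IsTree) (r v : α) : G.Walk v r := (hG.existsUnique_path v r).choose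

lemma isPath_pathToRoot (hG : G.IsTree) (r v : α) : (pathToRoot hG r v).IsPath :=
  (hG.existsUnique_path v r).choose_spec.1

lemma eq_pathToRoot (hG : G.IsTree) {r v : α} {w : G.Walk v r} (hw : w.IsPath) :
    w = pathToRoot hG r v :=
  (hG.existsUnique_path v r).choose_spec.2 w hw

def treeParent (hG : G.IsTree) (r v : α) : α := (pathToRoot hG r v).snd

lemma treeParent_root (hG : G.IsTree) (r : α) : treeParent hG r r = r := by
  rw [treeParent, ← eq_pathToRoot hG Walk.IsPath.nil]
  rfl

lemma adj_treeParent (hG : G.IsTree) {r v : α} (hv : v ≠ r) : G.Adj v (treeParent hG r v) :=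
  Walk.adj_snd (Walk.not_nil_of_ne hv)

lemma length_pathToRoot_treeParent (hG : G.IsTree) {r v : α} (hv : v ≠ r) :
    (pathToRoot hG r (treeParent hG r v)).length + 1 = (pathToRoot hG r v).length := by
  rw [treeParent, ← eq_pathToRoot hG (isPath_pathToRoot hG r v).tail]
  exact Walk.length_tail_add_one (Walk.not_nil_of_ne hv)

lemma isRootedAt_treeParent (hG : G.IsTree) (r : α) : IsRootedAt (treeParent hG r) r := by
  refine ⟨treeParent_root hG r, fun v => ?_⟩
  induction hl : (pathToRoot hG r v).length using Nat.strong_induction_on generalizing v with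
  | _ l ih =>
    by_cases hv : v = r
    · exact ⟨0, hv⟩
    · obtain ⟨k, hk⟩ := ih _ (by rw [← hl, ← length_pathToRoot_treeParent hG hv]; omega)
        (treeParent hG r v) rfl
      exact ⟨k + 1, by rwa [iterate_succ_apply]⟩

lemma parentGraph_treeParent [Finite α] (hG : G.IsTree) (r : α) :
    parentGraph (treeParent hG r) = G := by
  refine (isRootedAt_treeParent hG r).isTree.eq_of_le hG fun x y hxy => ?_
  have hne : ∀ {u}, u ≠ treeParent hG r u → u ≠ r :=
    fun h hu => h (hu ▸ (treeParent_root hG r).symm)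
  rcases parentGraph_adj.1 hxy with ⟨hxy, rfl | rfl⟩
  · exact adj_treeParent hG (hne hxy)
  · exact (adj_treeParent hG (hne (Ne.symm hxy))).symm

def treeEquivRootedAt [Finite α] (r : α) :
    {G : SimpleGraph α // G.IsTree} ≃ {p : α → α // IsRootedAt p r} :=
  (Equiv.ofBijective (fun p => ⟨parentGraph p.1, p.2.isTree⟩)
    ⟨fun p q h => Subtype.ext (p.2.eq_of_parentGraph_eq q.2 (congrArg Subtype.val h)),
      fun G => ⟨⟨_, isRootedAt_treeParent G.2 r⟩,
        Subtype.ext (parentGraph_treeParent G.2 r)⟩⟩).symm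

def rootedMapEquiv [Finite α] : RootedMap α ≃ α × {G : SimpleGraph α // G.IsTree} :=
  (Equiv.sigmaCongrRight fun r => (treeEquivRootedAt r).symm).trans (Equiv.sigmaEquivProd _ _)

end Trees

end

end Cayley

/-- **Cayley's formula**: for `n ≥ 2` there are exactly `n^(n-2)` labeled trees
(connected acyclic simple graphs) on the vertex set `{1, …, n}`. -/
theorem cayley_formula (n : ℕ) (hn : 2 ≤ n) :
    Nat.card {G : SimpleGraph (Fin n) // G.IsTree} = n ^ (n - 2) := by
  have : Nonempty (Fin n) := ⟨⟨0, by omega⟩⟩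
  have h := Nat.card_congr (Cayley.endoEquivRootedMapProd.trans
    (Equiv.prodCongr Cayley.rootedMapEquiv (Equiv.refl (Fin n))))
  rw [Nat.card_fun, Nat.card_prod, Nat.card_prod, Nat.card_fin] at h
  have hpow : n ^ n = n * n * n ^ (n - 2) := by
    rw [← sq, ← pow_add, Nat.add_sub_cancel' hn]
  exact Nat.eq_of_mul_eq_mul_left (by positivity : 0 < n * n) (by rw [← hpow, h]; ring)
end

section
/- For words w of length n over the alphabet {0,1,...,k-1}, the identity sum over n >= 0 of z^n * (sum over w in {0,...,k-1}^n of x^{des(w)} q^{sum(w)}) = (x-1)/(x - (z - zx; q)_k) holds as formal power series, where (a; q)_k = product over i from 0 to k-1 of (1 - a q^i), des(w) is the number of indices i with w_i > w_{i+1}, and sum(w) is the sum of the letters of w. -/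
/-!
Write `u = x - 1`. For a nonempty word `w`, `u · x^{des w} = ∑ u^j x^{des w'}`, summed over the
factorisations `w = v w'` in which `v` is strictly decreasing of length `j ≥ 1`. Strictly decreasing words of length `j` are the `j`-subsets of
the alphabet, so with letter weights `f` they contribute the elementary symmetric function
`e_j(f)`. Hence the weighted word counts satisfy `u A_n = ∑_{j ≥ 1} u^j e_j A_{n-j}` with
`A_0 = 1`; since `(z - zx; q)_k = ∏_i (1 + u z qⁱ) = ∑_j u^j e_j(1, q, …, q^{k-1}) z^j`, this
recurrence says exactly that `A · (x - (z - zx; q)_k) = u`.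
-/

/-- The number of descents of a word `w = w₀ w₁ ⋯ w_{n-1}`: positions `i` with
`wᵢ > w_{i+1}`. -/
noncomputable def wordDes {n k : ℕ} (w : Fin n → Fin k) : ℕ :=
  Nat.card {i : Fin n // ∃ h : (i : ℕ) + 1 < n, w ⟨(i : ℕ) + 1, h⟩ < w i}

def wordSum {n k : ℕ} (w : Fin n → Fin k) : ℕ := ∑ i, (w i : ℕ)

noncomputable abbrev xvar : MvPolynomial (Fin 2) ℤ := MvPolynomial.X 0
noncomputable abbrev qvar : MvPolynomial (Fin 2) ℤ := MvPolynomial.X 1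

namespace DescentGF

open Finset PowerSeries

variable {α : Type*}

section Descents

variable [LinearOrder α]

def des : List α → ℕ
  | a :: b :: t => (if b < a then 1 else 0) + des (b :: t)
  | _ => 0

@[simp] lemma des_nil : des ([] : List α) = 0 := rfl

@[simp] lemma des_singleton (a : α) : des [a] = 0 := rfl

lemma des_cons_cons (a b : α) (t : List α) :
    des (a :: b :: t) = (if b < a then 1 else 0) + des (b :: t) := rfl

lemma des_ofFn {n : ℕ} (w : Fin (n + 1) → α) :
    des (List.ofFn w) = ∑ i : Fin n, if w i.succ < w i.castSucc then 1 else 0 := by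
  induction n with
  | zero => simp
  | succ n ih =>
    have hcons : des (List.ofFn w) =
        (if w (Fin.succ 0) < w 0 then 1 else 0) + des (List.ofFn (Fin.tail w)) := by
      rw [List.ofFn_succ, List.ofFn_succ (f := fun i => w i.succ), des_cons_cons,
        List.ofFn_succ (f := Fin.tail w)]
      rfl
    rw [hcons, ih, Fin.sum_univ_succ]
    rfl

lemma sortedGT_cons_cons {a b : α} {t : List α} :
    (a :: b :: t).SortedGT ↔ b < a ∧ (b :: t).SortedGT := by
  simp only [List.sortedGT_iff_isChain, List.isChain_cons_cons, gt_iff_lt]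

theorem sub_one_mul_pow_des {R : Type*} [CommRing R] (x : R) (a : α) (t : List α) :
    (x - 1) * x ^ des (a :: t) = ∑ i ∈ range (t.length + 1),
      if ((a :: t).take (i + 1)).SortedGT then
        (x - 1) ^ (i + 1) * x ^ des ((a :: t).drop (i + 1)) else 0 := by
  induction t generalizing a with
  | nil => simp [List.sortedGT_iff_isChain]
  | cons b t ih =>
    -- The prefix `[a]` gives `(x - 1) x^{des (b :: t)}`. Longer prefixes contribute only if
    -- `b < a`, and then `x - 1` times the terms for `b :: t`, i.e. `(x - 1)² x^{des (b :: t)}`.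
    rw [List.length_cons, sum_range_succ']
    by_cases hba : b < a
    · have hshift : ∀ i ∈ range (t.length + 1),
          (if ((a :: b :: t).take (i + 1 + 1)).SortedGT then
            (x - 1) ^ (i + 1 + 1) * x ^ des ((a :: b :: t).drop (i + 1 + 1)) else 0) =
          (x - 1) * if ((b :: t).take (i + 1)).SortedGT then
            (x - 1) ^ (i + 1) * x ^ des ((b :: t).drop (i + 1)) else 0 := by
        intro i _
        simp only [List.take_succ_cons, List.drop_succ_cons, sortedGT_cons_cons, hba, true_and]
        split_ifs <;> ring
      rw [sum_congr rfl hshift, ← mul_sum, ← ih b]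
      simp [List.sortedGT_iff_isChain, des_cons_cons, hba]
      ring
    · simp [List.sortedGT_iff_isChain, des_cons_cons, hba]

def descentWeight {R : Type*} [CommRing R] (x : R) (f : α → R) (l : List α) : R :=
  x ^ des l * (l.map f).prod

lemma sub_one_mul_descentWeight {R : Type*} [CommRing R] {n : ℕ} (x : R) (f : α → R)
    {l : List α} (hl : l.length = n + 1) :
    (x - 1) * descentWeight x f l = ∑ p ∈ antidiagonal n,
      (if (l.take (p.1 + 1)).SortedGT then (x - 1) ^ (p.1 + 1) * ((l.take (p.1 + 1)).map f).prod
        else 0) * descentWeight x f (l.drop (p.1 + 1)) := by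
  obtain ⟨a, t, rfl⟩ := List.exists_cons_of_length_eq_add_one hl
  rw [List.length_cons, Nat.add_right_cancel_iff] at hl
  rw [descentWeight, ← mul_assoc, sub_one_mul_pow_des, sum_mul,
    Nat.sum_antidiagonal_eq_sum_range_succ_mk, hl]
  refine sum_congr rfl fun i _ => ?_
  have hsplit : ((a :: t).map f).prod =
      (((a :: t).take (i + 1)).map f).prod * (((a :: t).drop (i + 1)).map f).prod := by
    rw [← List.prod_append, ← List.map_append, List.take_append_drop]
  rw [hsplit, descentWeight]
  split_ifs <;> ring

end Descents

section Words

variable (α) [Fintype α]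

def wordsOfLength (n : ℕ) : Finset (List α) :=
  (univ : Finset (Fin n → α)).map ⟨List.ofFn, List.ofFn_injective⟩

variable {α}

@[simp] lemma mem_wordsOfLength {n : ℕ} {l : List α} :
    l ∈ wordsOfLength α n ↔ l.length = n := by
  refine ⟨?_, fun h => ?_⟩
  · simp only [wordsOfLength, mem_map]
    rintro ⟨w, -, rfl⟩
    exact List.length_ofFn
  · subst h
    exact mem_map.2 ⟨fun i => l[i], mem_univ _, List.ofFn_getElem⟩

lemma sum_wordsOfLength {M : Type*} [AddCommMonoid M] (n : ℕ) (g : List α → M) :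
    ∑ l ∈ wordsOfLength α n, g l = ∑ w : Fin n → α, g (List.ofFn w) :=
  sum_map _ _ _

lemma wordsOfLength_zero : wordsOfLength α 0 = {[]} := by
  ext l
  simp

lemma sum_wordsOfLength_add {M : Type*} [AddCommMonoid M] (i j : ℕ) (g : List α → List α → M) :
    ∑ l ∈ wordsOfLength α (i + j), g (l.take i) (l.drop i) =
      ∑ u ∈ wordsOfLength α i, ∑ v ∈ wordsOfLength α j, g u v := by
  rw [← sum_product']
  refine sum_nbij' (fun l => (l.take i, l.drop i)) (fun p => p.1 ++ p.2) ?_ ?_ ?_ ?_ ?_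
  · intro l hl
    simp_all
  · rintro ⟨u, v⟩ huv
    simp_all
  · intro l _
    exact List.take_append_drop i l
  · rintro ⟨u, v⟩ huv
    simp_all
  · intro l _
    rfl

lemma coeff_prod_one_sub {R : Type*} [CommRing R] (x : R) (f : α → R) (m : ℕ) :
    coeff m (∏ a, (1 - (X - X * C x) * C (f a))) = (x - 1) ^ m * (univ.val.map f).esymm m := by
  have hfactor : ∀ a, (1 - (X - X * C x) * C (f a) : R⟦X⟧) = 1 + C ((x - 1) * f a) * X := by
    intro a
    simp only [map_mul, map_sub, map_one]
    ring
  simp_rw [hfactor, prod_one_add, prod_mul_distrib, prod_const, ← map_prod, map_sum,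
    coeff_C_mul_X_pow, esymm_map_val, powersetCard_eq_filter, sum_filter, mul_sum]
  refine sum_congr rfl fun t _ => ?_
  rw [prod_mul_distrib, prod_const]
  by_cases h : #t = m
  · simp [h]
  · simp [h, Ne.symm h]

end Words

variable [LinearOrder α] [Fintype α]

lemma sum_sortedGT_wordsOfLength {S : Type*} [CommSemiring S] (f : α → S) (m : ℕ) :
    ∑ l ∈ wordsOfLength α m with l.SortedGT, (l.map f).prod = (univ.val.map f).esymm m := by
  rw [Finset.esymm_map_val]
  refine sum_nbij' List.toFinset (fun S => S.sort (· ≥ ·)) ?_ ?_ ?_ ?_ ?_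
  · intro l hl
    rw [mem_filter, mem_wordsOfLength] at hl
    simp [List.toFinset_card_of_nodup hl.2.nodup, hl.1]
  · intro S hS
    rw [mem_powersetCard] at hS
    simp [hS.2, sortedGT_sort]
  · intro l hl
    rw [mem_filter, mem_wordsOfLength] at hl
    exact (sortedGT_sort _).eq_of_mem_iff hl.2 (by simp)
  · intro S _
    exact sort_toFinset _ _
  · intro l hl
    rw [mem_filter, mem_wordsOfLength] at hl
    exact (List.prod_toFinset f hl.2.nodup).symm

variable {R : Type*} [CommRing R]

def descentSum (x : R) (f : α → R) (n : ℕ) : R :=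
  ∑ l ∈ wordsOfLength α n, descentWeight x f l

lemma descentSum_zero (x : R) (f : α → R) : descentSum x f 0 = 1 := by
  simp [descentSum, descentWeight, wordsOfLength_zero]

lemma sub_one_mul_descentSum_succ (x : R) (f : α → R) (n : ℕ) :
    (x - 1) * descentSum x f (n + 1) = ∑ p ∈ antidiagonal n,
      (x - 1) ^ (p.1 + 1) * (univ.val.map f).esymm (p.1 + 1) * descentSum x f p.2 := by
  let g (i : ℕ) (u v : List α) : R :=
    (if u.SortedGT then (x - 1) ^ (i + 1) * (u.map f).prod else 0) * descentWeight x f v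
  calc (x - 1) * descentSum x f (n + 1)
      = ∑ p ∈ antidiagonal n, ∑ l ∈ wordsOfLength α (p.1 + 1 + p.2),
          g p.1 (l.take (p.1 + 1)) (l.drop (p.1 + 1)) := by
        rw [descentSum, mul_sum, sum_congr rfl fun l hl =>
          sub_one_mul_descentWeight x f (mem_wordsOfLength.1 hl), sum_comm]
        refine sum_congr rfl fun p hp => ?_
        rw [add_right_comm, mem_antidiagonal.1 hp]
    _ = ∑ p ∈ antidiagonal n, ∑ u ∈ wordsOfLength α (p.1 + 1), ∑ v ∈ wordsOfLength α p.2,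
          g p.1 u v :=
        sum_congr rfl fun p _ => sum_wordsOfLength_add _ _ (g p.1)
    _ = _ := by
        refine sum_congr rfl fun p _ => ?_
        rw [descentSum, ← sum_sortedGT_wordsOfLength, sum_filter,
          mul_sum (wordsOfLength α (p.1 + 1)), sum_mul_sum]
        refine sum_congr rfl fun u _ => sum_congr rfl fun v _ => ?_
        simp only [g, mul_ite, mul_zero]

theorem mk_descentSum_mul (x : R) (f : α → R) :
    mk (descentSum x f) * (C x - ∏ a, (1 - (X - X * C x) * C (f a))) = C (x - 1) := by
  have hesymm_zero : (univ.val.map f).esymm 0 = 1 := by simp [esymm_map_val]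
  ext n
  rw [mul_comm, coeff_mul]
  cases n with
  | zero => simp [coeff_prod_one_sub, descentSum_zero, hesymm_zero]
  | succ n =>
    rw [Nat.sum_antidiagonal_succ]
    simp only [map_sub, coeff_C, coeff_prod_one_sub, coeff_mk, hesymm_zero, Nat.succ_ne_zero,
      if_true, if_false, pow_zero, mul_one, zero_sub, neg_mul, sum_neg_distrib, sub_self]
    rw [sub_one_mul_descentSum_succ, add_neg_cancel]

end DescentGF

lemma wordDes_eq_des {n k : ℕ} (w : Fin n → Fin k) :
    wordDes w = DescentGF.des (List.ofFn w) := by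
  cases n with
  | zero => simp [wordDes]
  | succ n =>
    classical
    rw [DescentGF.des_ofFn, wordDes, Nat.card_eq_fintype_card, Fintype.card_subtype,
      Finset.card_filter, Fin.sum_univ_castSucc]
    simp [Fin.succ]

open PowerSeries in
/-- Remmel's generating function for descents and sums over words in `{0, …, k-1}ⁿ`:
`∑_{n≥0} zⁿ ∑_{w ∈ {0,…,k-1}ⁿ} x^{des w} q^{sum w} = (x-1)/(x - (z - zx; q)_k)`,
stated in cross-multiplied form as formal power series in `z` over `ℤ[x,q]`, where
`(a; q)_k = ∏_{i=0}^{k-1} (1 - a qⁱ)` is the `q`-Pochhammer symbol. -/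
theorem word_descent_gf (k : ℕ) :
    (PowerSeries.mk fun n => ∑ w : Fin n → Fin k, xvar ^ wordDes w * qvar ^ wordSum w) *
      (C xvar - ∏ i ∈ Finset.range k,
        (1 - (PowerSeries.X - PowerSeries.X * C xvar) * C (qvar ^ i)))
    = C (xvar - 1) := by
  have hcoeff (n : ℕ) : ∑ w : Fin n → Fin k, xvar ^ wordDes w * qvar ^ wordSum w =
      DescentGF.descentSum xvar (fun i : Fin k => qvar ^ (i : ℕ)) n := by
    rw [DescentGF.descentSum, DescentGF.sum_wordsOfLength]
    refine Finset.sum_congr rfl fun w _ => ?_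
    rw [DescentGF.descentWeight, wordDes_eq_des, List.map_ofFn, List.prod_ofFn, wordSum,
      ← Finset.prod_pow_eq_pow_sum]
    rfl
  simp only [hcoeff, ← Fin.prod_univ_eq_prod_range (fun i => 1 - (X - X * C xvar) * C (qvar ^ i))]
  exact DescentGF.mk_descentSum_mul xvar _
end

section
/- For the complete homogeneous and elementary symmetric functions, h_mu = sum over partitions lambda of n of (-1)^{n - ell(lambda)} |B_{lambda,mu}| e_lambda, where |B_{lambda,mu}| is the number of brick tabloids of shape mu and content lambda, n = |mu|, and ell(lambda) is the number of parts of lambda. -/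
/-- The number of brick tabloids of shape `μ` and content `λ`: tilings of the rows of the
Young diagram of `μ` in which every row is partitioned into consecutive nonempty bricks,
such that the multiset of all brick lengths is exactly the multiset of parts of `λ`.
A tabloid is recorded as a list of rows (one ordered list of brick lengths per row of `μ`). -/
noncomputable def brickTabloidCount {n : ℕ} (lam mu : Nat.Partition n) : ℕ :=
  Nat.card {f : List (List ℕ) //
    f.map List.sum = mu.parts.sort (· ≤ ·) ∧ (∀ b ∈ f.flatten, 0 < b) ∧
      (↑f.flatten : Multiset ℕ) = lam.parts}

/-! `∏ᵢ (1 - xᵢ t)` and `∏ᵢ (1 - xᵢ t)⁻¹` are the generating functions of `(-1)ᵏ eₖ` and `hₖ`, so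
their product being `1` gives the recursion `h_{n+1} = ∑_{i+j=n} (-1)ⁱ e_{i+1} h_j`. Unfolding it,
`hₙ` is the signed sum of `e_c` over the compositions `c` of `n`, i.e. over the brick fillings of a
row of length `n`. Multiplying over the rows of `μ` gives a sum over brick tabloids of shape `μ`,
and grouping the tabloids by content `λ` gives the coefficients `(-1)^{n-ℓ(λ)} |B_{λ,μ}|`. -/

open Finset

namespace PowerSeries

variable {S ι : Type*} [CommRing S]

theorem one_sub_C_mul_X_mul_mk_pow (r : S) : (1 - C r * X) * mk (r ^ ·) = 1 := by
  simpa [rescale_mk, rescale_X, mul_comm] using congrArg (rescale r) (mk_one_mul_one_sub_eq_one S)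

theorem coeff_prod_one_sub_C_mul_X (s : Finset ι) (r : ι → S) (k : ℕ) :
    coeff k (∏ i ∈ s, (1 - C (r i) * X)) = (-1) ^ k * ∑ t ∈ s.powersetCard k, ∏ i ∈ t, r i := by
  have hfactor : ∀ i, 1 - C (r i) * X = 1 + C (-r i) * X := fun i => by
    rw [map_neg, neg_mul, sub_eq_add_neg]
  simp_rw [hfactor, prod_one_add, prod_mul_distrib, prod_const, ← map_prod, map_sum,
    coeff_C_mul_X_pow, eq_comm (a := k), ← sum_filter, ← powersetCard_eq_filter, mul_sum]
  refine sum_congr rfl fun t ht => ?_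
  rw [prod_neg, (mem_powersetCard.mp ht).2]

theorem coeff_prod_mk_pow [Fintype ι] [DecidableEq ι] (r : ι → S) (k : ℕ) :
    coeff k (∏ i, mk (r i ^ ·)) = ∑ s : Sym ι k, (s.1.map r).prod := by
  have hsum (l : ι →₀ ℕ) : ∑ i, l i = Multiset.card l.toMultiset := by
    simp [Finsupp.card_toMultiset, Finsupp.sum_fintype]
  rw [coeff_prod]
  refine sum_bij' (fun l hl => ⟨l.toMultiset, ?_⟩) (fun s _ => Multiset.toFinsupp s.1)
    (fun _ _ => mem_univ _) (fun s _ => ?_) (fun l _ => by simp) (fun s _ => by ext; simp)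
    (fun l _ => ?_)
  · simpa [mem_finsuppAntidiag, hsum] using hl
  · simp [mem_finsuppAntidiag, hsum]
  · simp [Finsupp.toMultiset_map, Finsupp.prod_toMultiset, Finsupp.prod_mapDomain_index,
      Finsupp.prod_fintype, pow_add]

end PowerSeries

def compositions : ℕ → Finset (List ℕ)
  | 0 => {[]}
  | n + 1 => (antidiagonal n).attach.biUnion fun p =>
      (compositions p.1.2).image ((p.1.1 + 1) :: ·)
decreasing_by exact Nat.antidiagonal.snd_lt p.2

theorem mem_compositions {n : ℕ} {c : List ℕ} :
    c ∈ compositions n ↔ (∀ b ∈ c, 0 < b) ∧ c.sum = n := by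
  induction c generalizing n with
  | nil => cases n <;> simp [compositions]
  | cons b c ih =>
    cases n with
    | zero => simp +contextual [compositions, Nat.pos_iff_ne_zero]
    | succ n =>
      simp only [compositions, mem_biUnion, mem_attach, mem_image, true_and, Subtype.exists,
        HasAntidiagonal.mem_antidiagonal, List.cons.injEq, List.mem_cons, forall_eq_or_imp,
        List.sum_cons, Prod.exists, exists_prop]
      constructor
      · rintro ⟨i, j, rfl, c, hc, rfl, rfl⟩
        obtain ⟨hpos, rfl⟩ := ih.mp hc
        exact ⟨⟨i.succ_pos, hpos⟩, by omega⟩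
      · rintro ⟨⟨hb, hpos⟩, hsum⟩
        exact ⟨b - 1, c.sum, by omega, c, ih.mpr ⟨hpos, rfl⟩, by omega, rfl⟩

theorem sum_compositions_succ {M : Type*} [AddCommMonoid M] (f : List ℕ → M) (n : ℕ) :
    ∑ c ∈ compositions (n + 1), f c =
      ∑ p ∈ antidiagonal n, ∑ c ∈ compositions p.2, f ((p.1 + 1) :: c) := by
  rw [compositions, sum_biUnion, ← sum_attach (antidiagonal n)]
  · exact sum_congr rfl fun p _ => sum_image fun _ _ _ _ h => List.cons_injective h
  · intro p _ q _ hpq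
    refine disjoint_left.mpr fun c hp hq => hpq ?_
    obtain ⟨c₁, -, rfl⟩ := mem_image.mp hp
    obtain ⟨c₂, -, h⟩ := mem_image.mp hq
    have h₁ := HasAntidiagonal.mem_antidiagonal.mp p.2
    have h₂ := HasAntidiagonal.mem_antidiagonal.mp q.2
    have : q.1.1 = p.1.1 := by simpa using (List.cons.inj h).1
    exact Subtype.ext (Prod.ext this (by omega)).symm

def brickTabloids : List ℕ → Finset (List (List ℕ))
  | [] => {[]}
  | a :: L => (compositions a ×ˢ brickTabloids L).image fun p => p.1 :: p.2

theorem mem_brickTabloids {L : List ℕ} {F : List (List ℕ)} :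
    F ∈ brickTabloids L ↔ F.map List.sum = L ∧ ∀ b ∈ F.flatten, 0 < b := by
  induction L generalizing F with
  | nil => cases F <;> simp [brickTabloids]
  | cons a L ih =>
    cases F with
    | nil => simp [brickTabloids]
    | cons c F =>
      simp only [brickTabloids, mem_image, mem_product, Prod.exists, List.cons.injEq,
        mem_compositions, ih, List.map_cons, List.flatten_cons, List.mem_append]
      grind

theorem sum_brickTabloids_cons {M : Type*} [AddCommMonoid M] (f : List (List ℕ) → M)
    (a : ℕ) (L : List ℕ) :
    ∑ F ∈ brickTabloids (a :: L), f F =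
      ∑ c ∈ compositions a, ∑ F ∈ brickTabloids L, f (c :: F) := by
  rw [brickTabloids, sum_image fun _ _ _ _ h => Prod.ext (List.cons.inj h).1 (List.cons.inj h).2,
    sum_product]

namespace MvPolynomial

variable {σ R : Type*} [Fintype σ] [DecidableEq σ] [CommRing R]

theorem sum_antidiagonal_neg_one_pow_mul_esymm_mul_hsymm (n : ℕ) :
    ∑ p ∈ antidiagonal n, (-1) ^ p.1 * esymm σ R p.1 * hsymm σ R p.2 = if n = 0 then 1 else 0 := by
  have hEH : (∏ i, (1 - PowerSeries.C (X i : MvPolynomial σ R) * PowerSeries.X)) *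
      ∏ i, PowerSeries.mk (X i ^ ·) = 1 := by
    simp [← prod_mul_distrib, PowerSeries.one_sub_C_mul_X_mul_mk_pow]
  simpa [PowerSeries.coeff_mul, PowerSeries.coeff_one, PowerSeries.coeff_prod_one_sub_C_mul_X,
    PowerSeries.coeff_prod_mk_pow, esymm, hsymm, mul_assoc]
    using congrArg (PowerSeries.coeff n) hEH

theorem hsymm_succ (n : ℕ) :
    hsymm σ R (n + 1) = ∑ p ∈ antidiagonal n, (-1) ^ p.1 * esymm σ R (p.1 + 1) * hsymm σ R p.2 := by
  have h := sum_antidiagonal_neg_one_pow_mul_esymm_mul_hsymm (σ := σ) (R := R) (n + 1)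
  simp only [Finset.Nat.sum_antidiagonal_succ, pow_zero, esymm_zero, one_mul, pow_succ,
    mul_neg_one, neg_mul, sum_neg_distrib, if_neg n.succ_ne_zero] at h
  linear_combination h

-- The sign `(-1)^(n - ℓ(c))` is written as `(-1)^(n + ℓ(c))`, avoiding truncated subtraction.
theorem hsymm_eq_sum_compositions (n : ℕ) :
    hsymm σ R n = ∑ c ∈ compositions n, (-1) ^ (n + c.length) * (c.map (esymm σ R)).prod := by
  induction n using Nat.strong_induction_on with
  | _ n ih =>
    cases n with
    | zero => simp [compositions]
    | succ n =>
      rw [hsymm_succ, sum_compositions_succ]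
      refine sum_congr rfl fun p hp => ?_
      obtain rfl : p.1 + p.2 = n := HasAntidiagonal.mem_antidiagonal.mp hp
      rw [ih p.2 (by omega), mul_sum]
      refine sum_congr rfl fun c _ => ?_
      simp only [List.length_cons, List.map_cons, List.prod_cons]
      ring

theorem prod_hsymm_eq_sum_brickTabloids (L : List ℕ) :
    (L.map (hsymm σ R)).prod = ∑ F ∈ brickTabloids L,
      (-1) ^ (L.sum + F.flatten.length) * (F.flatten.map (esymm σ R)).prod := by
  induction L with
  | nil => simp [brickTabloids]
  | cons a L ih =>
    rw [List.map_cons, List.prod_cons, hsymm_eq_sum_compositions, ih, sum_mul_sum,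
      sum_brickTabloids_cons]
    refine sum_congr rfl fun c _ => sum_congr rfl fun F _ => ?_
    simp only [List.sum_cons, List.flatten_cons, List.length_append, List.map_append,
      List.prod_append]
    ring

end MvPolynomial

theorem Nat.Partition.card_parts_le {n : ℕ} (lam : n.Partition) :
    Multiset.card lam.parts ≤ n := by
  simpa [lam.parts_sum] using Multiset.card_nsmul_le_sum fun _ hb => lam.parts_pos hb

theorem sum_brickTabloids_eq_sum_partition {M : Type*} [AddCommMonoid M] {n : ℕ} {L : List ℕ}
    (hL : L.sum = n) (w : Multiset ℕ → M) :
    ∑ F ∈ brickTabloids L, w F.flatten =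
      ∑ lam : n.Partition, #{F ∈ brickTabloids L | (F.flatten : Multiset ℕ) = lam.parts} •
        w lam.parts := by
  have hcontent : ∀ F ∈ brickTabloids L,
      (F.flatten : Multiset ℕ) ∈ univ.image (Nat.Partition.parts (n := n)) := by
    intro F hF
    obtain ⟨hrows, hpos⟩ := mem_brickTabloids.mp hF
    refine mem_image.mpr ⟨⟨F.flatten, fun hb => hpos _ hb, ?_⟩, mem_univ _, rfl⟩
    rw [Multiset.sum_coe, List.sum_flatten, hrows, hL]
  rw [← sum_fiberwise_of_maps_to hcontent, sum_image fun _ _ _ _ h => Nat.Partition.ext h]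
  refine sum_congr rfl fun lam _ => ?_
  rw [sum_congr rfl fun F hF => congrArg w (mem_filter.mp hF).2, sum_const]

theorem card_filter_brickTabloids {n : ℕ} (lam mu : n.Partition) :
    #{F ∈ brickTabloids (mu.parts.sort (· ≤ ·)) | (F.flatten : Multiset ℕ) = lam.parts} =
      brickTabloidCount lam mu := by
  rw [brickTabloidCount, ← Nat.card_eq_finsetCard]
  exact Nat.card_congr (Equiv.subtypeEquivRight fun F => by simp [mem_brickTabloids, and_assoc])

open MvPolynomial in
/-- The Eğecioğlu–Remmel brick tabloid expansion
`h_μ = ∑_{λ ⊢ n} (-1)^{n - ℓ(λ)} |B_{λ,μ}| e_λ` of the complete homogeneous symmetric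
functions in terms of the elementary ones (stated in `N` variables for every `N`). -/
theorem brick_tabloid_expansion (N n : ℕ) (mu : Nat.Partition n) :
    hsymmPart (Fin N) ℤ mu =
      ∑ lam : Nat.Partition n,
        C ((-1 : ℤ) ^ (n - lam.parts.card) * brickTabloidCount lam mu) *
          esymmPart (Fin N) ℤ lam := by
  set L := mu.parts.sort (· ≤ ·)
  have hL : (L : Multiset ℕ) = mu.parts := Multiset.sort_eq _ _
  have hsum : L.sum = n := by rw [← Multiset.sum_coe, hL, mu.parts_sum]
  calc hsymmPart (Fin N) ℤ mu = (L.map (hsymm (Fin N) ℤ)).prod := by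
        rw [hsymmPart, ← hL, Multiset.map_coe, Multiset.prod_coe]
    _ = ∑ F ∈ brickTabloids L,
          (-1) ^ (n + F.flatten.length) * (F.flatten.map (esymm (Fin N) ℤ)).prod := by
        rw [prod_hsymm_eq_sum_brickTabloids, hsum]
    _ = ∑ lam : n.Partition, #{F ∈ brickTabloids L | (F.flatten : Multiset ℕ) = lam.parts} •
          ((-1) ^ (n + lam.parts.card) * esymmPart (Fin N) ℤ lam) := by
        simpa [esymmPart] using sum_brickTabloids_eq_sum_partition hsum
          fun m => (-1) ^ (n + m.card) * (m.map (esymm (Fin N) ℤ)).prod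
    _ = _ := sum_congr rfl fun lam _ => by
        have hsign : (-1 : MvPolynomial (Fin N) ℤ) ^ (n + lam.parts.card) =
            C ((-1) ^ (n - lam.parts.card)) := by
          have := lam.card_parts_le
          rw [show n + lam.parts.card = n - lam.parts.card + 2 * lam.parts.card by omega,
            pow_add, pow_mul]
          simp
        rw [card_filter_brickTabloids, hsign, nsmul_eq_mul, map_mul, map_natCast]
        ring
end

section
/- Suppose a word w over an alphabet whose letters are the vertices of a graph G represents G when vertices x,y are adjacent iff the restriction of w to the letters x and y avoids the pattern 11 after deleting at most two letters appropriately; then every finite simple graph is 2-11-representable. -/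
set_option linter.unusedSectionVars false

open List

namespace TwoEleven

variable {V : Type*} [DecidableEq V]

/-- Number of adjacent equal pairs in a list. -/
def defects : List V → ℕ
  | [] => 0
  | [_] => 0
  | a :: b :: t => (if a = b then 1 else 0) + defects (b :: t)

@[simp] lemma defects_nil : defects ([] : List V) = 0 := rfl
@[simp] lemma defects_singleton (a : V) : defects [a] = 0 := rfl
lemma defects_cons_cons (a b : V) (t : List V) :
    defects (a :: b :: t) = (if a = b then 1 else 0) + defects (b :: t) := rfl

lemma defects_cons_le (a : V) (t : List V) : defects (a :: t) ≤ defects t + 1 := by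
  cases t with
  | nil => simp
  | cons b s => rw [defects_cons_cons]; split <;> omega

lemma defects_key (b a : V) (t : List V) :
    defects (a :: t) + (if b = a then 1 else 0) ≤ defects (b :: t) + 1 := by
  cases t with
  | nil => simp only [defects_singleton]; split <;> omega
  | cons c s =>
      rw [defects_cons_cons, defects_cons_cons]
      by_cases h1 : a = c <;> by_cases h2 : b = a
      · simp [h1, h2]
      · simp [h1, h2]; split <;> omega
      · subst h2; simp [h1]
      · simp [h1]; split <;> split <;> omega

lemma defects_sublist : ∀ {u' u : List V}, u' <+ u →
    (defects u + u'.length ≤ defects u' + u.length) ∧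
    ∀ a : V, defects (a :: u) + u'.length ≤ defects (a :: u') + u.length := by
  intro u' u h
  induction h with
  | slnil => simp
  | @cons l₁ l₂ a h ih =>
      obtain ⟨ih1, ih2⟩ := ih
      constructor
      · have h1 := defects_cons_le a l₂
        simp only [length_cons]; omega
      · intro b
        have h3 := ih2 a
        have h4 := defects_key b a l₁
        rw [defects_cons_cons]
        simp only [length_cons]; omega
  | @cons_cons l₁ l₂ a h ih =>
      obtain ⟨ih1, ih2⟩ := ih
      have h3 := ih2 a
      constructor
      · simp only [length_cons]; omega
      · intro b
        rw [defects_cons_cons, defects_cons_cons]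
        simp only [length_cons]; omega

lemma defects_eq_zero_iff : ∀ {u : List V}, defects u = 0 ↔ u.Chain' (· ≠ ·)
  | [] => iff_of_true rfl List.isChain_nil
  | [a] => iff_of_true rfl (List.isChain_singleton a)
  | a :: b :: t => by
      rw [defects_cons_cons, show Chain' (· ≠ ·) (a :: b :: t) ↔ a ≠ b ∧ Chain' (· ≠ ·) (b :: t) from List.isChain_cons_cons, ← defects_eq_zero_iff (u := b :: t)]
      by_cases hab : a = b <;> simp [hab]

lemma length_le_destutter' : ∀ (t : List V) (a : V),
    t.length + 1 ≤ (List.destutter' (· ≠ ·) a t).length + defects (a :: t)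
  | [], a => by simp [List.destutter']
  | b :: t, a => by
      rw [List.destutter']
      by_cases hab : a = b
      · have ih := length_le_destutter' t a
        rw [if_neg (by simp [hab]), defects_cons_cons, if_pos hab]
        subst hab
        simp only [length_cons]
        omega
      · have ih := length_le_destutter' t b
        rw [if_pos (by exact hab), defects_cons_cons, if_neg hab]
        simp only [length_cons]
        omega

lemma length_le_destutter (u : List V) :
    u.length ≤ (u.destutter (· ≠ ·)).length + defects u := by
  cases u with
  | nil => simp
  | cons a t =>
      rw [List.destutter_cons']
      have := length_le_destutter' t a
      simpa only [length_cons] using this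

/-! ### flips of block sequences -/

def flips : List (List V) → ℕ
  | [] => 0
  | [_] => 0
  | a :: b :: t => (if a = b then 0 else 1) + flips (b :: t)

@[simp] lemma flips_nil : flips ([] : List (List V)) = 0 := rfl
@[simp] lemma flips_singleton (a : List V) : flips [a] = 0 := rfl
lemma flips_cons_cons (a b : List V) (t : List (List V)) :
    flips (a :: b :: t) = (if a = b then 0 else 1) + flips (b :: t) := rfl

lemma flips_cons_of_const (c : List V) :
    ∀ {r : List (List V)}, (∀ e ∈ r, e = c) → flips (c :: r) = 0
  | [], _ => rfl
  | d :: r, h => by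
      have hd : d = c := h d (by simp)
      rw [flips_cons_cons, hd, if_pos rfl,
        flips_cons_of_const c (fun e he => h e (by simp [he]))]

lemma flips_of_const {c : List V} :
    ∀ {r : List (List V)}, (∀ e ∈ r, e = c) → flips r = 0
  | [], _ => rfl
  | d :: r, h => by
      have hd : d = c := h d (by simp)
      subst hd
      exact flips_cons_of_const d (fun e he => h e (by simp [he]))

lemma flips_cons_of_const_ne {c d : List V} {r : List (List V)} (hr : r ≠ [])
    (h : ∀ e ∈ r, e = c) (hdc : d ≠ c) : flips (d :: r) = 1 := by
  cases r with
  | nil => exact absurd rfl hr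
  | cons e r' =>
      have he : e = c := h e (by simp)
      subst he
      rw [flips_cons_cons, if_neg hdc, flips_cons_of_const _ (fun x hx => h x (by simp [hx]))]

lemma flips_cons_head {c : List V} {r : List (List V)} (hr : r ≠ []) (hh : r.headI = c) :
    flips (c :: r) = flips r := by
  cases r with
  | nil => exact absurd rfl hr
  | cons d r' =>
      simp only [headI] at hh
      subst hh
      simp [flips_cons_cons]

lemma getLastD_irrel : ∀ (A : List V), A ≠ [] → ∀ d d' : V, A.getLastD d = A.getLastD d'
  | [_], _, _, _ => rfl
  | a :: b :: A, _, d, d' => by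
      rw [List.getLastD_cons (a := d) (b := a) (l := b :: A), List.getLastD_cons (a := d') (b := a) (l := b :: A)]

lemma flips_append (d : List V) :
    ∀ (A B : List (List V)), A ≠ [] →
      flips (A ++ B) = flips A + flips (A.getLastD d :: B)
  | [], _, h => absurd rfl h
  | [c], B, _ => by simp
  | c :: c' :: A'', B, _ => by
      have ih := flips_append d (c' :: A'') B (by simp)
      have h1 : (c :: c' :: A'').getLastD d = (c' :: A'').getLastD d := by
        rw [List.getLastD_cons]
        exact getLastD_irrel _ (by simp) c d
      simp only [cons_append] at ih ⊢
      rw [flips_cons_cons, flips_cons_cons, h1]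
      omega

/-! ### The walk and sequence constructions -/

variable (G : SimpleGraph V)

open Classical in
/-- `a` walks through the listing `t`, stuttering at non-neighbors. -/
noncomputable def walkSeq (a : V) : List V → List (List V)
  | [] => [[a]]
  | x :: s => (a :: x :: s) ::
      ((if G.Adj a x then [] else [x :: a :: s, a :: x :: s]) ++ (walkSeq a s).map (x :: ·))

noncomputable def graphSeq : List V → List (List V)
  | [] => [[]]
  | a :: t => walkSeq G a ((graphSeq t).headI) ++ (graphSeq t).map (a :: ·)

lemma walkSeq_ne_nil (a : V) (t : List V) : walkSeq G a t ≠ [] := by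
  cases t <;> simp [walkSeq]

lemma graphSeq_ne_nil (t : List V) : graphSeq G t ≠ [] := by
  cases t <;> simp [graphSeq, walkSeq_ne_nil]

lemma walkSeq_headI (a : V) (t : List V) : (walkSeq G a t).headI = a :: t := by
  cases t <;> rfl

lemma headI_mem {α : Type*} [Inhabited α] {A : List α} (h : A ≠ []) : A.headI ∈ A := by
  cases A with
  | nil => exact absurd rfl h
  | cons a t => simp

lemma getLastD_append_right {α : Type*} (A : List α) {B : List α} (hB : B ≠ []) (d : α) :
    (A ++ B).getLastD d = B.getLastD d := by
  rw [List.getLastD_eq_getLast?, List.getLastD_eq_getLast?, List.getLast?_append,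
    Option.or_of_isSome (by rwa [List.getLast?_isSome])]

lemma walkSeq_getLastD (a : V) :
    ∀ (t : List V) (d : List V), (walkSeq G a t).getLastD d = t ++ [a]
  | [], d => rfl
  | x :: s, d => by
      have hne : (walkSeq G a s).map (x :: ·) ≠ [] := by
        simp [walkSeq_ne_nil]
      rw [walkSeq, List.getLastD_cons,
        getLastD_append_right _ hne,
        getLastD_irrel _ hne _ (x :: (s ++ [a])),
        show (x :: (s ++ [a])) = (fun z => x :: z) (s ++ [a]) from rfl,
        List.getLastD_map, walkSeq_getLastD a s]
      simp

lemma walkSeq_perm (a : V) : ∀ (t : List V), ∀ L ∈ walkSeq G a t, L.Perm (a :: t)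
  | [], L, hL => by
      simp only [walkSeq, mem_singleton] at hL; simp [hL]
  | x :: s, L, hL => by
      rw [walkSeq] at hL
      rcases List.mem_cons.1 hL with h | h
      · simp [h]
      rcases List.mem_append.1 h with h | h
      · split at h
        · simp at h
        · rcases List.mem_cons.1 h with h | h
          · subst h; exact List.Perm.swap a x s
          · simp at h; simp [h]
      · obtain ⟨L', hL', rfl⟩ := List.mem_map.1 h
        calc x :: L' ~ x :: a :: s := (walkSeq_perm a s L' hL').cons x
          _ ~ a :: x :: s := List.Perm.swap a x s

lemma graphSeq_perm : ∀ (t : List V), ∀ L ∈ graphSeq G t, L.Perm t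
  | [], L, hL => by
      simp only [graphSeq, mem_singleton] at hL; simp [hL]
  | a :: t, L, hL => by
      have hH : (graphSeq G t).headI ∈ graphSeq G t :=
        headI_mem (graphSeq_ne_nil G t)
      have hHp : ((graphSeq G t).headI).Perm t := graphSeq_perm t _ hH
      rw [graphSeq] at hL
      rcases List.mem_append.1 hL with h | h
      · exact (walkSeq_perm G a _ L h).trans (hHp.cons a)
      · obtain ⟨L', hL', rfl⟩ := List.mem_map.1 h
        exact (graphSeq_perm t L' hL').cons a

/-! ### filters of pairs -/

def pb (x y : V) : V → Bool := fun z => decide (z = x ∨ z = y)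

variable {x y : V}

@[simp] lemma pb_self_left : pb x y x = true := by simp [pb]
@[simp] lemma pb_self_right : pb x y y = true := by simp [pb]
lemma pb_false {z : V} (hx : z ≠ x) (hy : z ≠ y) : pb x y z = false := by simp [pb, hx, hy]

lemma filter_pb_nil : ∀ {t : List V}, x ∉ t → y ∉ t → t.filter (pb x y) = []
  | [], _, _ => rfl
  | c :: s, hx, hy => by
      have hc : pb x y c = false :=
        pb_false (by rintro rfl; exact hx (mem_cons_self))
          (by rintro rfl; exact hy (mem_cons_self))
      simp only [filter_cons, hc, Bool.false_eq_true, if_false]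
      exact filter_pb_nil (fun h => hx (mem_cons_of_mem c h))
        (fun h => hy (mem_cons_of_mem c h))

lemma filter_pb_right : ∀ {t : List V}, t.Nodup → x ∉ t → y ∈ t → t.filter (pb x y) = [y]
  | c :: s, hn, hx, hy => by
      rcases List.mem_cons.1 hy with rfl | hys
      · rw [filter_cons, if_pos (by simp)]
        rw [filter_pb_nil (fun h => hx (mem_cons_of_mem _ h)) (nodup_cons.1 hn).1]
      · have hcx : c ≠ x := by rintro rfl; exact hx (mem_cons_self)
        have hcy : c ≠ y := by rintro rfl; exact (nodup_cons.1 hn).1 hys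
        rw [filter_cons, if_neg (by simp [pb_false hcx hcy])]
        exact filter_pb_right (nodup_cons.1 hn).2 (fun h => hx (mem_cons_of_mem c h)) hys

lemma filter_pb_left : ∀ {t : List V}, t.Nodup → x ∈ t → y ∉ t → t.filter (pb x y) = [x]
  | c :: s, hn, hx, hy => by
      rcases List.mem_cons.1 hx with rfl | hxs
      · rw [filter_cons, if_pos (by simp)]
        rw [filter_pb_nil (nodup_cons.1 hn).1 (fun h => hy (mem_cons_of_mem _ h))]
      · have hcx : c ≠ x := by rintro rfl; exact (nodup_cons.1 hn).1 hxs
        have hcy : c ≠ y := by rintro rfl; exact hy (mem_cons_self)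
        rw [filter_cons, if_neg (by simp [pb_false hcx hcy])]
        exact filter_pb_left (nodup_cons.1 hn).2 hxs (fun h => hy (mem_cons_of_mem c h))

lemma filter_pb_pair : ∀ {t : List V}, t.Nodup → x ∈ t → y ∈ t → x ≠ y →
    t.filter (pb x y) = [x, y] ∨ t.filter (pb x y) = [y, x]
  | c :: s, hn, hx, hy, hxy => by
      rcases List.mem_cons.1 hx with rfl | hxs
      · left
        have hys : y ∈ s := by
          rcases List.mem_cons.1 hy with h | h
          · exact absurd h.symm hxy
          · exact h
        rw [filter_cons, if_pos (by simp)]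
        rw [filter_pb_right (nodup_cons.1 hn).2 (nodup_cons.1 hn).1 hys]
      · rcases List.mem_cons.1 hy with rfl | hys
        · right
          rw [filter_cons, if_pos (by simp)]
          rw [filter_pb_left (nodup_cons.1 hn).2 hxs (nodup_cons.1 hn).1]
        · have hcx : c ≠ x := by rintro rfl; exact (nodup_cons.1 hn).1 hxs
          have hcy : c ≠ y := by rintro rfl; exact (nodup_cons.1 hn).1 hys
          rw [filter_cons, if_neg (by simp [pb_false hcx hcy])]
          exact filter_pb_pair (nodup_cons.1 hn).2 hxs hys hxy

lemma cons_ne_cons' {a b : V} {s t : List V} (h : a ≠ b) : a :: s ≠ b :: t := by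
  intro hh; exact h (by injection hh)

/-- blocks of a walk for a pair not containing the walker are constant. -/
lemma walkSeq_filter_const {a : V} (ha : pb x y a = false) :
    ∀ (t : List V), ∀ L ∈ walkSeq G a t, L.filter (pb x y) = t.filter (pb x y)
  | [], L, hL => by
      simp only [walkSeq, mem_singleton] at hL
      subst hL
      simp [filter_cons, ha]
  | c :: s, L, hL => by
      rw [walkSeq] at hL
      rcases List.mem_cons.1 hL with rfl | h
      · simp [filter_cons, ha]
      rcases List.mem_append.1 h with h | h
      · split at h
        · simp at h
        · rcases List.mem_cons.1 h with rfl | h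
          · simp [filter_cons, ha]
          · simp only [mem_singleton] at h
            subst h
            simp [filter_cons, ha]
      · obtain ⟨L', hL', rfl⟩ := List.mem_map.1 h
        have := walkSeq_filter_const ha s L' hL'
        simp only [filter_cons]
        rw [this]

lemma headI_map {α β : Type*} [Inhabited α] [Inhabited β] (f : α → β) {A : List α}
    (hA : A ≠ []) : (A.map f).headI = f A.headI := by
  cases A with
  | nil => exact absurd rfl hA
  | cons a t => rfl

lemma list_pair_ne (hxy : x ≠ y) : ([x, y] : List V) ≠ [y, x] := by
  intro h
  exact hxy (by injection h)

open Classical in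
lemma flips_walk (hxy : x ≠ y) :
    ∀ {t : List V}, t.Nodup → x ∉ t → y ∈ t →
      flips ((walkSeq G x t).map (·.filter (pb x y))) =
        if G.Adj x y then 1 else 3
  | c :: s, hn, hx, hy => by
      have hxs : x ∉ s := fun h => hx (mem_cons_of_mem c h)
      rcases List.mem_cons.1 hy with rfl | hys
      · -- c = y
        have hys : y ∉ s := (nodup_cons.1 hn).1
        have hfs : s.filter (pb x y) = [] := filter_pb_nil hxs hys
        have hblock : ∀ b ∈ ((walkSeq G x s).map (y :: ·)).map (·.filter (pb x y)),
            b = [y, x] := by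
          intro b hb
          simp only [map_map, mem_map] at hb
          obtain ⟨L, hL, rfl⟩ := hb
          have hperm : (L.filter (pb x y)).Perm ((x :: s).filter (pb x y)) :=
            (walkSeq_perm G x s L hL).filter _
          have : (x :: s).filter (pb x y) = [x] := by
            rw [filter_cons, if_pos (by simp), hfs]
          rw [this] at hperm
          have hLf : L.filter (pb x y) = [x] := hperm.eq_singleton
          show (y :: L).filter (pb x y) = [y, x]
          rw [filter_cons, if_pos (by simp), hLf]
        have hne : ((walkSeq G x s).map (y :: ·)).map (·.filter (pb x y)) ≠ [] := by
          simp [walkSeq_ne_nil]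
        have hhead : (x :: y :: s).filter (pb x y) = [x, y] := by
          rw [filter_cons, if_pos (by simp), filter_cons, if_pos (by simp), hfs]
        by_cases hadj : G.Adj x y
        · rw [if_pos hadj, walkSeq, if_pos hadj]
          simp only [nil_append, map_cons, hhead]
          exact flips_cons_of_const_ne hne hblock (list_pair_ne hxy)
        · rw [if_neg hadj, walkSeq, if_neg hadj]
          simp only [cons_append, nil_append, map_cons, hhead]
          have h1 : (y :: x :: s).filter (pb x y) = [y, x] := by
            rw [filter_cons, if_pos (by simp), filter_cons, if_pos (by simp), hfs]
          rw [h1, flips_cons_cons, flips_cons_cons,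
            if_neg (list_pair_ne hxy), if_neg (Ne.symm (list_pair_ne hxy)),
            flips_cons_of_const_ne hne hblock (list_pair_ne hxy)]
      · -- c ≠ y
        have hcy : c ≠ y := by rintro rfl; exact (nodup_cons.1 hn).1 hys
        have hcx : c ≠ x := by rintro rfl; exact hx (mem_cons_self)
        have hc : pb x y c = false := pb_false hcx hcy
        have hns : s.Nodup := (nodup_cons.1 hn).2
        have hfs : s.filter (pb x y) = [y] := filter_pb_right hns hxs hys
        have hb1 : (x :: c :: s).filter (pb x y) = [x, y] := by
          rw [filter_cons, if_pos (by simp), filter_cons, hc, hfs]; simp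
        have hb2 : (c :: x :: s).filter (pb x y) = [x, y] := by
          rw [filter_cons, hc]
          simp only [Bool.false_eq_true, if_false]
          rw [filter_cons, if_pos (by simp), hfs]
        have hmapeq : ((walkSeq G x s).map (c :: ·)).map (·.filter (pb x y)) =
            (walkSeq G x s).map (·.filter (pb x y)) := by
          rw [map_map]
          refine List.map_congr_left fun L hL => ?_
          simp [Function.comp_apply, filter_cons, hc]
        have hmne : (walkSeq G x s).map (·.filter (pb x y)) ≠ [] := by
          simp [walkSeq_ne_nil]
        have hmhead : ((walkSeq G x s).map (·.filter (pb x y))).headI = [x, y] := by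
          rw [headI_map _ (walkSeq_ne_nil G x s), walkSeq_headI]
          rw [filter_cons, if_pos (by simp), hfs]
        have ih := flips_walk hxy hns hxs hys
        have key : flips ((walkSeq G x (c :: s)).map (·.filter (pb x y))) =
            flips ((walkSeq G x s).map (·.filter (pb x y))) := by
          rw [walkSeq]
          by_cases hac : G.Adj x c
          · rw [if_pos hac]
            simp only [nil_append, map_cons, hb1, hmapeq]
            exact flips_cons_head hmne hmhead
          · rw [if_neg hac]
            simp only [cons_append, nil_append, map_cons, hb1, hb2, hmapeq]
            rw [flips_cons_cons, if_pos rfl, flips_cons_cons, if_pos rfl,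
              flips_cons_head hmne hmhead]
            omega
        rw [key, ih]

open Classical in
lemma flips_graphSeq (hxy : x ≠ y) :
    ∀ {t : List V}, t.Nodup → x ∈ t → y ∈ t →
      flips ((graphSeq G t).map (·.filter (pb x y))) =
        if G.Adj x y then 2 else 4
  | a :: t, hn, hx, hy => by
      have hnt : t.Nodup := (nodup_cons.1 hn).2
      have hant : a ∉ t := (nodup_cons.1 hn).1
      have hHmem := headI_mem (graphSeq_ne_nil G t)
      have hHperm : ((graphSeq G t).headI).Perm t := graphSeq_perm G t _ hHmem
      have hHnodup : ((graphSeq G t).headI).Nodup := hHperm.nodup_iff.2 hnt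
      set H := (graphSeq G t).headI with hH
      have hWne : (walkSeq G a H).map (·.filter (pb x y)) ≠ [] := by
        simp [walkSeq_ne_nil]
      have hMne : ((graphSeq G t).map (a :: ·)).map (·.filter (pb x y)) ≠ [] := by
        simp [graphSeq_ne_nil]
      have hWlast : ((walkSeq G a H).map (·.filter (pb x y))).getLastD [] =
          (H ++ [a]).filter (pb x y) := by
        have h0 := List.getLastD_map (f := fun L : List V => L.filter (pb x y))
          (l := walkSeq G a H) (a := [])
        simp only [filter_nil] at h0
        rw [h0, walkSeq_getLastD G a H []]
      have happ := flips_append [] ((walkSeq G a H).map (·.filter (pb x y)))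
        (((graphSeq G t).map (a :: ·)).map (·.filter (pb x y))) hWne
      have hsplit : (graphSeq G (a :: t)).map (·.filter (pb x y)) =
          (walkSeq G a H).map (·.filter (pb x y)) ++
            (((graphSeq G t).map (a :: ·)).map (·.filter (pb x y))) := by
        rw [graphSeq, map_append]
      rw [hsplit, happ, hWlast]
      by_cases hax : a = x
      · -- the walker is x
        subst a
        have hxt : x ∉ t := hant
        have hyt : y ∈ t := by
          rcases List.mem_cons.1 hy with h | h
          · exact absurd h.symm hxy
          · exact h
        have hxH : x ∉ H := fun h => hxt (hHperm.mem_iff.1 h)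
        have hyH : y ∈ H := hHperm.mem_iff.2 hyt
        have hW := flips_walk G hxy hHnodup hxH hyH
        have hfH : H.filter (pb x y) = [y] := filter_pb_right hHnodup hxH hyH
        have hlast : (H ++ [x]).filter (pb x y) = [y, x] := by
          rw [filter_append, hfH, filter_cons, if_pos (by simp), filter_nil]
          rfl
        have hconst : ∀ b ∈ ((graphSeq G t).map (x :: ·)).map (·.filter (pb x y)),
            b = [x, y] := by
          intro b hb
          simp only [map_map, mem_map] at hb
          obtain ⟨L, hL, rfl⟩ := hb
          have hLperm := graphSeq_perm G t L hL
          have hLf : L.filter (pb x y) = [y] :=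
            filter_pb_right (hLperm.nodup_iff.2 hnt)
              (fun h => hxt (hLperm.mem_iff.1 h)) (hLperm.mem_iff.2 hyt)
          show (x :: L).filter (pb x y) = [x, y]
          rw [filter_cons, if_pos (by simp), hLf]
        rw [hlast, hW, flips_cons_of_const_ne hMne hconst (Ne.symm (list_pair_ne hxy))]
        by_cases hadj : G.Adj x y
        · rw [if_pos hadj, if_pos hadj]
        · rw [if_neg hadj, if_neg hadj]
      by_cases hay : a = y
      · -- the walker is y
        subst a
        have hyt : y ∉ t := hant
        have hxt : x ∈ t := by
          rcases List.mem_cons.1 hx with h | h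
          · exact absurd h hxy
          · exact h
        have hyH : y ∉ H := fun h => hyt (hHperm.mem_iff.1 h)
        have hxH : x ∈ H := hHperm.mem_iff.2 hxt
        have hWcomm : (walkSeq G y H).map (·.filter (pb x y)) =
            (walkSeq G y H).map (·.filter (pb y x)) := by
          refine List.map_congr_left fun L _ => ?_
          refine List.filter_congr fun z _ => ?_
          simp [pb, Or.comm]
        have hW := flips_walk G (Ne.symm hxy) hHnodup hyH hxH
        have hfH : H.filter (pb x y) = [x] := filter_pb_left hHnodup hxH hyH
        have hlast : (H ++ [y]).filter (pb x y) = [x, y] := by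
          rw [filter_append, hfH, filter_cons, if_pos (by simp), filter_nil]
          rfl
        have hconst : ∀ b ∈ ((graphSeq G t).map (y :: ·)).map (·.filter (pb x y)),
            b = [y, x] := by
          intro b hb
          simp only [map_map, mem_map] at hb
          obtain ⟨L, hL, rfl⟩ := hb
          have hLperm := graphSeq_perm G t L hL
          have hLf : L.filter (pb x y) = [x] :=
            filter_pb_left (hLperm.nodup_iff.2 hnt)
              (hLperm.mem_iff.2 hxt) (fun h => hyt (hLperm.mem_iff.1 h))
          show (y :: L).filter (pb x y) = [y, x]
          rw [filter_cons, if_pos (by simp), hLf]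
        rw [hlast, hWcomm, hW,
          flips_cons_of_const_ne hMne hconst (list_pair_ne hxy)]
        rw [G.adj_comm y x]
        by_cases hadj : G.Adj x y
        · rw [if_pos hadj, if_pos hadj]
        · rw [if_neg hadj, if_neg hadj]
      · -- the walker is neither x nor y
        have hxt : x ∈ t := by
          rcases List.mem_cons.1 hx with h | h
          · exact absurd h.symm hax
          · exact h
        have hyt : y ∈ t := by
          rcases List.mem_cons.1 hy with h | h
          · exact absurd h.symm hay
          · exact h
        have ha : pb x y a = false := pb_false hax hay
        have hconstW : ∀ b ∈ (walkSeq G a H).map (·.filter (pb x y)),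
            b = H.filter (pb x y) := by
          intro b hb
          obtain ⟨L, hL, rfl⟩ := mem_map.1 hb
          exact walkSeq_filter_const G ha H L hL
        have hW0 : flips ((walkSeq G a H).map (·.filter (pb x y))) = 0 :=
          flips_of_const hconstW
        have hlast : (H ++ [a]).filter (pb x y) = H.filter (pb x y) := by
          rw [filter_append, filter_cons, ha]
          simp
        have hMeq : ((graphSeq G t).map (a :: ·)).map (·.filter (pb x y)) =
            (graphSeq G t).map (·.filter (pb x y)) := by
          rw [map_map]
          refine List.map_congr_left fun L _ => ?_
          show (a :: L).filter (pb x y) = L.filter (pb x y)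
          rw [filter_cons, ha]
          simp
        have hMne' : (graphSeq G t).map (·.filter (pb x y)) ≠ [] := by
          simp [graphSeq_ne_nil]
        have hMhead : ((graphSeq G t).map (·.filter (pb x y))).headI =
            H.filter (pb x y) := by
          rw [headI_map _ (graphSeq_ne_nil G t)]
        rw [hlast, hW0, hMeq, flips_cons_head hMne' hMhead,
          flips_graphSeq hxy hnt hxt hyt]
        simp

lemma defects_flatten (hxy : x ≠ y) : ∀ {B : List (List V)},
    (∀ b ∈ B, b = [x, y] ∨ b = [y, x]) → defects B.flatten = flips B
  | [], _ => rfl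
  | [b], h => by
      rcases h b (mem_cons_self) with rfl | rfl <;>
        simp [defects_cons_cons, hxy, Ne.symm hxy]
  | b :: c :: r, h => by
      have ih := defects_flatten hxy (fun e he => h e (mem_cons_of_mem b he))
      rcases h b (mem_cons_self) with rfl | rfl <;>
        rcases h c (mem_cons_of_mem _ (mem_cons_self)) with hc | hc <;>
        rw [hc] at ih ⊢ <;>
        simp only [flatten_cons, cons_append, nil_append, defects_cons_cons,
          flips_cons_cons] at ih ⊢ <;>
        simp [hxy, Ne.symm hxy] at ih ⊢ <;>
        omega

end TwoEleven

open TwoEleven List in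
/-- Every finite simple graph is `2`-`11`-representable: there is a word `w` over the
vertex alphabet, containing every vertex, such that distinct vertices `x` and `y` are
adjacent if and only if one can delete at most `2` letters from the subword of `w` induced
by the letters `x` and `y` so as to obtain a word avoiding the pattern `11` (i.e. with no
two equal consecutive letters). -/
theorem every_graph_is_two_eleven_representable
    (V : Type*) [Fintype V] [DecidableEq V] (G : SimpleGraph V) :
    ∃ w : List V, (∀ v : V, v ∈ w) ∧
      ∀ x y : V, x ≠ y →
        (G.Adj x y ↔
          ∃ u : List V, u.Sublist (w.filter fun z => z = x ∨ z = y) ∧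
            (w.filter fun z => z = x ∨ z = y).length ≤ u.length + 2 ∧
            u.Chain' (· ≠ ·)) := by
  classical
  obtain ⟨l, hl_nodup, hl_mem⟩ : ∃ l : List V, l.Nodup ∧ ∀ v : V, v ∈ l :=
    ⟨(Finset.univ : Finset V).toList, Finset.nodup_toList _, fun v => by simp⟩
  refine ⟨(graphSeq G l).flatten, ?_, ?_⟩
  · intro v
    exact List.mem_flatten.2 ⟨(graphSeq G l).headI, headI_mem (graphSeq_ne_nil G l),
      (graphSeq_perm G l _ (headI_mem (graphSeq_ne_nil G l))).mem_iff.2 (hl_mem v)⟩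
  · intro x y hxy
    have hpb : (fun z => decide (z = x ∨ z = y)) = pb x y := rfl
    have hfilter : ((graphSeq G l).flatten).filter (pb x y) =
        ((graphSeq G l).map (·.filter (pb x y))).flatten :=
      List.filter_flatten
    have hshape : ∀ b ∈ (graphSeq G l).map (·.filter (pb x y)),
        b = [x, y] ∨ b = [y, x] := by
      intro b hb
      obtain ⟨L, hL, rfl⟩ := mem_map.1 hb
      have hLperm := graphSeq_perm G l L hL
      exact filter_pb_pair (hLperm.nodup_iff.2 hl_nodup)
        (hLperm.mem_iff.2 (hl_mem x)) (hLperm.mem_iff.2 (hl_mem y)) hxy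
    have hdef : defects (((graphSeq G l).flatten).filter (pb x y)) =
        if G.Adj x y then 2 else 4 := by
      rw [hfilter, defects_flatten hxy hshape,
        flips_graphSeq G hxy hl_nodup (hl_mem x) (hl_mem y)]
    show G.Adj x y ↔ ∃ u : List V,
        u.Sublist (((graphSeq G l).flatten).filter (pb x y)) ∧
        (((graphSeq G l).flatten).filter (pb x y)).length ≤ u.length + 2 ∧
        u.Chain' (· ≠ ·)
    set F := ((graphSeq G l).flatten).filter (pb x y) with hF
    constructor
    · intro hadj
      rw [if_pos hadj] at hdef
      refine ⟨F.destutter (· ≠ ·), List.destutter_sublist _ _, ?_,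
        List.isChain_destutter _ _⟩
      have h1 := length_le_destutter F
      omega
    · rintro ⟨u, hsub, hlen, hch⟩
      by_contra hna
      rw [if_neg hna] at hdef
      have h2 := (defects_sublist hsub).1
      have h3 : defects u = 0 := defects_eq_zero_iff.2 hch
      have h4 := hsub.length_le
      omega
end
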